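/- Let Φ₀ ∈ ℂ⁴ and define the spinor field ψ(x) = (2/(1+|x|²))^{3/2} (I + i α·x) Φ₀ on ℝ³, where α·x = x₁α₁ + x₂α₂ + x₃α₃ and I is the 4×4 identity matrix. Then ψ is smooth and satisfies Dψ(x) = (3/(1+|x|²)) ψ(x) for all x ∈ ℝ³. (This spinor is the pullback under stereographic projection of a (−1/2)-Killing spinor on the round 3-sphere, which is a Dirac eigenspinor with eigenvalue 3/2.) -/

import Mathlib

open MeasureTheory Filter
open scoped ENNReal

noncomputable section

abbrev R3 := EuclideanSpace ℝ (Fin 3)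
abbrev Spinor := EuclideanSpace ℂ (Fin 4)

def pd {E : Type*} [NormedAddCommGroup E] [NormedSpace ℝ E] (j : Fin 3) (f : R3 → E) (x : R3) : E :=
  fderiv ℝ f x (EuclideanSpace.single j 1)

def lap {E : Type*} [NormedAddCommGroup E] [NormedSpace ℝ E] (f : R3 → E) (x : R3) : E :=
  ∑ j : Fin 3, pd j (pd j f) x

def pauli : Fin 3 → Matrix (Fin 2) (Fin 2) ℂ
  | 0 => !![0, 1; 1, 0]
  | 1 => !![0, -Complex.I; Complex.I, 0]
  | 2 => !![1, 0; 0, -1]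

def alpha (j : Fin 3) : Matrix (Fin 4) (Fin 4) ℂ :=
  Matrix.reindex finSumFinEquiv finSumFinEquiv (Matrix.fromBlocks 0 (pauli j) (pauli j) 0)

def toSpinor (v : Fin 4 → ℂ) : Spinor := (WithLp.equiv 2 (Fin 4 → ℂ)).symm v

def Dirac (ψ : R3 → Spinor) (x : R3) : Spinor :=
  toSpinor (-Complex.I • ∑ j : Fin 3, (alpha j).mulVec (WithLp.ofLp (pd j ψ x)))

def alphaDot (v : R3) : Matrix (Fin 4) (Fin 4) ℂ := ∑ j : Fin 3, (v j : ℂ) • alpha j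

def sigmaDot (v : R3) : Matrix (Fin 2) (Fin 2) ℂ := ∑ j : Fin 3, (v j : ℂ) • pauli j

/-- the unitary matrix 𝒰(x) -/
def Umat (x : R3) : Matrix (Fin 4) (Fin 4) ℂ :=
  Matrix.reindex finSumFinEquiv finSumFinEquiv
    (Matrix.fromBlocks 0 (-(Complex.I • sigmaDot (‖x‖⁻¹ • x)))
      (Complex.I • sigmaDot (‖x‖⁻¹ • x)) 0)

/-- inversion x ↦ x/|x|² -/
def invPt (x : R3) : R3 := (‖x‖ ^ 2)⁻¹ • x

def kelvinScalar (u : R3 → ℝ) (x : R3) : ℝ := ‖x‖⁻¹ * u (invPt x)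

def kelvinSpinor (ψ : R3 → Spinor) (x : R3) : Spinor :=
  (‖x‖ ^ 2)⁻¹ • toSpinor ((Umat x).mulVec (ψ (invPt x)))

/-- degree |α|₁ of a multi-index -/
def mdeg (a : Fin 3 → ℕ) : ℕ := ∑ i, a i

/-- monomial x^α -/
def mono (x : R3) (a : Fin 3 → ℕ) : ℝ := ∏ i, (x i) ^ (a i)

/-- multi-indices of degree at most M -/
def idxSet (M : ℕ) : Finset (Fin 3 → ℕ) :=
  (Fintype.piFinset fun _ => Finset.range (M + 1)).filter fun a => mdeg a ≤ M

def IsDistribSolution (u : R3 → ℝ) (ψ : R3 → Spinor) : Prop :=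
  (∀ f : R3 → ℝ, ContDiff ℝ (⊤ : ℕ∞) f → HasCompactSupport f →
    ∫ x : R3, u x * (-6 * lap f x) = ∫ x : R3, ‖ψ x‖ ^ 2 * u x * f x) ∧
  (∀ φ : R3 → Spinor, ContDiff ℝ (⊤ : ℕ∞) φ → HasCompactSupport φ →
    ∫ x : R3, (inner ℂ (ψ x) (Dirac φ x) : ℂ) = ∫ x : R3, ((u x : ℂ) ^ 2 * inner ℂ (ψ x) (φ x)))


namespace KSE

lemma alpha0 : alpha 0 = !![0,0,0,1; 0,0,1,0; 0,1,0,0; 1,0,0,0] := by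
  ext i j
  fin_cases i <;> fin_cases j <;>
    simp [alpha, pauli, Matrix.fromBlocks, finSumFinEquiv, Fin.addCases, Matrix.submatrix_apply,
      Fin.subNat, Fin.castLT, Matrix.vecHead, Matrix.vecTail] <;> rfl

lemma alpha1 : alpha 1 = !![0,0,0,-Complex.I; 0,0,Complex.I,0; 0,-Complex.I,0,0; Complex.I,0,0,0] := by
  ext i j
  fin_cases i <;> fin_cases j <;>
    simp [alpha, pauli, Matrix.fromBlocks, finSumFinEquiv, Fin.addCases, Matrix.submatrix_apply,
      Fin.subNat, Fin.castLT, Matrix.vecHead, Matrix.vecTail] <;> rfl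

lemma alpha2 : alpha 2 = !![0,0,1,0; 0,0,0,-1; 1,0,0,0; 0,-1,0,0] := by
  ext i j
  fin_cases i <;> fin_cases j <;>
    simp [alpha, pauli, Matrix.fromBlocks, finSumFinEquiv, Fin.addCases, Matrix.submatrix_apply,
      Fin.subNat, Fin.castLT, Matrix.vecHead, Matrix.vecTail] <;> rfl

lemma alpha_sq (j : Fin 3) : alpha j * alpha j = 1 := by
  have h0 : alpha 0 * alpha 0 = 1 := by
    rw [alpha0]; ext i k
    fin_cases i <;> fin_cases k <;>
      simp [Matrix.mul_apply, Fin.sum_univ_four, Matrix.one_apply, Matrix.vecHead, Matrix.vecTail]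
  have h1 : alpha 1 * alpha 1 = 1 := by
    rw [alpha1]; ext i k
    fin_cases i <;> fin_cases k <;>
      simp [Matrix.mul_apply, Fin.sum_univ_four, Matrix.one_apply, Matrix.vecHead,
        Matrix.vecTail, Complex.I_mul_I]
  have h2 : alpha 2 * alpha 2 = 1 := by
    rw [alpha2]; ext i k
    fin_cases i <;> fin_cases k <;>
      simp [Matrix.mul_apply, Fin.sum_univ_four, Matrix.one_apply, Matrix.vecHead, Matrix.vecTail]
  fin_cases j
  · exact h0
  · exact h1
  · exact h2

lemma alphaDot_explicit (x : R3) : alphaDot x =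
    !![0, 0, (x 2 : ℂ), (x 0 : ℂ) - Complex.I * (x 1 : ℂ);
       0, 0, (x 0 : ℂ) + Complex.I * (x 1 : ℂ), -(x 2 : ℂ);
       (x 2 : ℂ), (x 0 : ℂ) - Complex.I * (x 1 : ℂ), 0, 0;
       (x 0 : ℂ) + Complex.I * (x 1 : ℂ), -(x 2 : ℂ), 0, 0] := by
  rw [alphaDot, Fin.sum_univ_three, alpha0, alpha1, alpha2]
  ext i j
  fin_cases i <;> fin_cases j <;>
    simp [Matrix.add_apply, Matrix.smul_apply, Matrix.vecHead, Matrix.vecTail] <;> ring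

lemma norm_sq_eq (x : R3) : ‖x‖ ^ 2 = x 0 ^ 2 + x 1 ^ 2 + x 2 ^ 2 := by
  rw [EuclideanSpace.norm_eq, Real.sq_sqrt (by positivity)]
  simp [Fin.sum_univ_three, sq_abs]

lemma alphaDot_sq (x : R3) : alphaDot x * alphaDot x = ((‖x‖ ^ 2 : ℝ) : ℂ) • 1 := by
  have h : ((‖x‖ ^ 2 : ℝ) : ℂ) = (x 0 : ℂ) ^ 2 + (x 1 : ℂ) ^ 2 + (x 2 : ℂ) ^ 2 := by
    rw [norm_sq_eq]; push_cast; ring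
  rw [alphaDot_explicit, h]
  ext i j
  fin_cases i <;> fin_cases j <;>
    simp [Matrix.mul_apply, Fin.sum_univ_four, Matrix.one_apply, Matrix.smul_apply,
      Matrix.vecHead, Matrix.vecTail] <;>
    try ring1
  all_goals linear_combination (-(x 1 : ℂ) ^ 2) * Complex.I_sq

/-! ### spinor-level helpers -/

lemma toSpinor_add (a b : Fin 4 → ℂ) : toSpinor (a + b) = toSpinor a + toSpinor b := rfl

lemma toSpinor_csmul (c : ℂ) (a : Fin 4 → ℂ) : toSpinor (c • a) = c • toSpinor a := rfl

lemma toSpinor_sum {ι : Type*} (s : Finset ι) (g : ι → (Fin 4 → ℂ)) :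
    toSpinor (∑ i ∈ s, g i) = ∑ i ∈ s, toSpinor (g i) :=
  map_sum ((WithLp.linearEquiv 2 ℂ (Fin 4 → ℂ)).symm : (Fin 4 → ℂ) →ₗ[ℂ] Spinor) g s

lemma rsmul (r : ℝ) (v : Spinor) : r • v = (r : ℂ) • v :=
  RCLike.real_smul_eq_coe_smul (K := ℂ) r v

lemma mulVec_toSpinor (A : Matrix (Fin 4) (Fin 4) ℂ) (u : Fin 4 → ℂ) :
    A.mulVec (toSpinor u) = A.mulVec u := rfl

lemma sum_mulVec {ι : Type*} (s : Finset ι) (A : ι → Matrix (Fin 4) (Fin 4) ℂ) (v : Fin 4 → ℂ) :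
    (∑ j ∈ s, A j).mulVec v = ∑ j ∈ s, (A j).mulVec v := by
  classical
  induction s using Finset.induction with
  | empty => simp [Matrix.zero_mulVec]
  | insert a s h ih => simp [Finset.sum_insert h, Matrix.add_mulVec, ih]

def wSpin (Φ0 : Spinor) (j : Fin 3) : Spinor := toSpinor ((Complex.I • alpha j).mulVec Φ0)

def Lmap (Φ0 : Spinor) : R3 →L[ℝ] Spinor :=
  ∑ j : Fin 3, (PiLp.proj 2 (fun _ : Fin 3 => ℝ) j : R3 →L[ℝ] ℝ).smulRight (wSpin Φ0 j)

lemma Lmap_apply (Φ0 : Spinor) (y : R3) : Lmap Φ0 y = ∑ j : Fin 3, y j • wSpin Φ0 j := by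
  simp [Lmap, ContinuousLinearMap.sum_apply, ContinuousLinearMap.smulRight_apply]

def Ffun : ℝ → ℝ := fun t => (2 / (1 + t)) ^ ((3 : ℝ) / 2)

lemma G_eq (Φ0 : Spinor) (x : R3) :
    toSpinor (((1 : Matrix (Fin 4) (Fin 4) ℂ) + Complex.I • alphaDot x).mulVec Φ0)
      = toSpinor Φ0 + Lmap Φ0 x := by
  rw [Matrix.add_mulVec, Matrix.one_mulVec, toSpinor_add]
  congr 1
  rw [Lmap_apply, alphaDot, Finset.smul_sum, sum_mulVec, toSpinor_sum]
  refine Finset.sum_congr rfl fun j _ => ?_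
  rw [smul_comm Complex.I, Matrix.smul_mulVec, toSpinor_csmul, ← rsmul]
  rfl

lemma Ffun_hasDerivAt {t : ℝ} (ht : 0 ≤ t) :
    HasDerivAt Ffun (-(3 / (1 + t)) * Ffun t / 2) t := by
  have h1 : (0:ℝ) < 1 + t := by positivity
  have hu : HasDerivAt (fun s : ℝ => 2 / (1 + s)) (-(2 / (1 + t) ^ 2)) t := by
    have hd : HasDerivAt (fun s : ℝ => 1 + s) 1 t := (hasDerivAt_id t).const_add 1
    have h := (hasDerivAt_const t (2:ℝ)).div hd (ne_of_gt h1)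
    refine h.congr_deriv ?_
    ring
  have hs : (0:ℝ) < 2 / (1 + t) := by positivity
  have hr : HasDerivAt (fun s : ℝ => s ^ ((3:ℝ)/2))
      (((3:ℝ)/2) * (2 / (1 + t)) ^ ((3:ℝ)/2 - 1)) (2 / (1 + t)) :=
    Real.hasDerivAt_rpow_const (Or.inr (by norm_num))
  have h := hr.comp t hu
  refine h.congr_deriv ?_
  symm
  show -(3 / (1 + t)) * Ffun t / 2 = ((3:ℝ)/2) * (2 / (1 + t)) ^ ((3:ℝ)/2 - 1) * -(2 / (1 + t) ^ 2)
  rw [show (3:ℝ)/2 - 1 = 1/2 by norm_num]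
  show -(3 / (1 + t)) * (2 / (1 + t)) ^ ((3:ℝ)/2) / 2 = _
  rw [show (3:ℝ)/2 = 1/2 + 1 by norm_num, Real.rpow_add hs, Real.rpow_one]
  field_simp
  ring

lemma normsq_hasFDerivAt (x : R3) :
    HasFDerivAt (fun y : R3 => ‖y‖ ^ 2)
      (∑ j : Fin 3, (x j • (PiLp.proj 2 (fun _ : Fin 3 => ℝ) j : R3 →L[ℝ] ℝ)
        + x j • (PiLp.proj 2 (fun _ : Fin 3 => ℝ) j : R3 →L[ℝ] ℝ))) x := by
  have heq : (fun y : R3 => ‖y‖ ^ 2) = fun y : R3 => ∑ j : Fin 3, y j * y j := by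
    funext y; rw [norm_sq_eq y, Fin.sum_univ_three]; ring
  rw [heq]
  refine HasFDerivAt.fun_sum fun j _ => ?_
  have hj : HasFDerivAt (fun y : R3 => y j)
      (PiLp.proj 2 (fun _ : Fin 3 => ℝ) j : R3 →L[ℝ] ℝ) x := by
    have h := (PiLp.proj 2 (fun _ : Fin 3 => ℝ) j : R3 →L[ℝ] ℝ).hasFDerivAt (x := x)
    exact h
  exact hj.mul hj

lemma key_matrix (x : R3) (fR : ℝ) :
    (-Complex.I) • ∑ j : Fin 3,
        alpha j * (((-(3 / (1 + ‖x‖ ^ 2)) * fR * x j : ℝ) : ℂ) •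
            ((1 : Matrix (Fin 4) (Fin 4) ℂ) + Complex.I • alphaDot x)
          + ((fR : ℝ) : ℂ) • (Complex.I • alpha j)) =
      (((3 / (1 + ‖x‖ ^ 2) : ℝ) : ℂ) * ((fR : ℝ) : ℂ)) •
        ((1 : Matrix (Fin 4) (Fin 4) ℂ) + Complex.I • alphaDot x) := by
  have h1 : ((1 + ‖x‖ ^ 2 : ℝ) : ℂ) ≠ 0 := Complex.ofReal_ne_zero.2 (by positivity)
  set M : Matrix (Fin 4) (Fin 4) ℂ := 1 + Complex.I • alphaDot x with hM
  have expand : ∀ j : Fin 3,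
      alpha j * (((-(3 / (1 + ‖x‖ ^ 2)) * fR * x j : ℝ) : ℂ) • M
          + ((fR : ℝ) : ℂ) • (Complex.I • alpha j))
        = ((-(3 / (1 + ‖x‖ ^ 2)) * fR : ℝ) : ℂ) • ((x j : ℂ) • (alpha j * M))
          + ((fR : ℂ) * Complex.I) • (1 : Matrix (Fin 4) (Fin 4) ℂ) := by
    intro j
    rw [mul_add, Matrix.mul_smul, Matrix.mul_smul, Matrix.mul_smul, alpha_sq j, smul_smul]
    congr 1
    rw [show ((-(3 / (1 + ‖x‖ ^ 2)) * fR * x j : ℝ) : ℂ)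
        = ((-(3 / (1 + ‖x‖ ^ 2)) * fR : ℝ) : ℂ) * ((x j : ℂ)) by push_cast; ring, ← smul_smul]
  rw [Finset.sum_congr rfl fun j _ => expand j, Finset.sum_add_distrib, ← Finset.smul_sum,
    Finset.sum_const, Finset.card_univ, Fintype.card_fin]
  have hsum : ∑ j : Fin 3, (x j : ℂ) • (alpha j * M) = alphaDot x * M := by
    rw [alphaDot, Finset.sum_mul]
    exact Finset.sum_congr rfl fun j _ => (Matrix.smul_mul _ _ _).symm
  rw [hsum]
  have hDM : alphaDot x * M = alphaDot x + (Complex.I * ((‖x‖ ^ 2 : ℝ) : ℂ)) • 1 := by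
    rw [hM, mul_add, Matrix.mul_one, Matrix.mul_smul, alphaDot_sq, smul_smul]
  rw [hDM, hM]
  have h1' : (1:ℂ) + ((‖x‖:ℝ):ℂ)^2 ≠ 0 := by push_cast at h1 ⊢; exact h1
  match_scalars <;>
    (ring_nf; try simp only [Complex.I_sq]; try field_simp [h1']; try ring)

end KSE

open KSE in
/-- Killing spinors pulled back to ℝ³ are Dirac eigenspinors with the conformal weight. -/
theorem killing_spinor_eigen (Φ0 : Spinor) (ψ : R3 → Spinor)
    (hψ_def : ∀ x : R3,
      ψ x = (2 / (1 + ‖x‖ ^ 2)) ^ ((3 : ℝ) / 2) •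
        toSpinor (((1 : Matrix (Fin 4) (Fin 4) ℂ)
          + Complex.I • alphaDot x).mulVec Φ0)) :
    ContDiff ℝ (⊤ : ℕ∞) ψ ∧ ∀ x : R3, Dirac ψ x = (3 / (1 + ‖x‖ ^ 2)) • ψ x := by
  have hψ2 : ψ = fun y : R3 => Ffun (‖y‖ ^ 2) • (toSpinor Φ0 + Lmap Φ0 y) := by
    funext y
    rw [hψ_def y, G_eq]
    rfl
  constructor
  · rw [hψ2]
    have hf_cd : ContDiff ℝ (⊤ : ℕ∞) fun y : R3 => Ffun (‖y‖ ^ 2) := by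
      rw [contDiff_iff_contDiffAt]
      intro y
      have h1 : (1 : ℝ) + ‖y‖ ^ 2 ≠ 0 := by positivity
      have hu : ContDiffAt ℝ (⊤ : ℕ∞) (fun t : ℝ => 2 / (1 + t)) (‖y‖ ^ 2) :=
        contDiffAt_const.div (contDiffAt_const.add contDiffAt_id) h1
      have hr : ContDiffAt ℝ (⊤ : ℕ∞) (fun s : ℝ => s ^ ((3:ℝ)/2)) (2 / (1 + ‖y‖ ^ 2)) :=
        Real.contDiffAt_rpow_const_of_ne (by positivity)
      exact (ContDiffAt.comp (‖y‖ ^ 2) hr hu).comp y (contDiff_norm_sq ℝ).contDiffAt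
    exact hf_cd.smul (contDiff_const.add (Lmap Φ0).contDiff)
  · intro x
    have hF : HasDerivAt Ffun (-(3 / (1 + ‖x‖ ^ 2)) * Ffun (‖x‖ ^ 2) / 2) (‖x‖ ^ 2) :=
      Ffun_hasDerivAt (sq_nonneg _)
    have hn := normsq_hasFDerivAt x
    have hf' := hF.comp_hasFDerivAt x hn
    have hG : HasFDerivAt (fun y : R3 => toSpinor Φ0 + Lmap Φ0 y) (Lmap Φ0) x :=
      (Lmap Φ0).hasFDerivAt.const_add _
    have hψ' : HasFDerivAt ψ
        (Ffun (‖x‖ ^ 2) • (Lmap Φ0)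
          + ((-(3 / (1 + ‖x‖ ^ 2)) * Ffun (‖x‖ ^ 2) / 2) •
              (∑ j : Fin 3, (x j • (PiLp.proj 2 (fun _ : Fin 3 => ℝ) j : R3 →L[ℝ] ℝ)
                + x j • (PiLp.proj 2 (fun _ : Fin 3 => ℝ) j : R3 →L[ℝ] ℝ)))).smulRight
              (toSpinor Φ0 + Lmap Φ0 x)) x := by
      rw [hψ2]
      exact hf'.smul hG
    have hDval : ∀ j : Fin 3,
        (Ffun (‖x‖ ^ 2) • (Lmap Φ0)
          + ((-(3 / (1 + ‖x‖ ^ 2)) * Ffun (‖x‖ ^ 2) / 2) •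
              (∑ k : Fin 3, (x k • (PiLp.proj 2 (fun _ : Fin 3 => ℝ) k : R3 →L[ℝ] ℝ)
                + x k • (PiLp.proj 2 (fun _ : Fin 3 => ℝ) k : R3 →L[ℝ] ℝ)))).smulRight
              (toSpinor Φ0 + Lmap Φ0 x)) (EuclideanSpace.single j 1) =
        toSpinor ((((-(3 / (1 + ‖x‖ ^ 2)) * Ffun (‖x‖ ^ 2) * x j : ℝ) : ℂ) •
            ((1 : Matrix (Fin 4) (Fin 4) ℂ) + Complex.I • alphaDot x)
          + ((Ffun (‖x‖ ^ 2) : ℝ) : ℂ) • (Complex.I • alpha j)).mulVec Φ0) := by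
      intro j
      have e1 : (Ffun (‖x‖ ^ 2) • (Lmap Φ0)
          + ((-(3 / (1 + ‖x‖ ^ 2)) * Ffun (‖x‖ ^ 2) / 2) •
              (∑ k : Fin 3, (x k • (PiLp.proj 2 (fun _ : Fin 3 => ℝ) k : R3 →L[ℝ] ℝ)
                + x k • (PiLp.proj 2 (fun _ : Fin 3 => ℝ) k : R3 →L[ℝ] ℝ)))).smulRight
              (toSpinor Φ0 + Lmap Φ0 x)) (EuclideanSpace.single j 1)
          = Ffun (‖x‖ ^ 2) • (Lmap Φ0 (EuclideanSpace.single j 1))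
          + ((-(3 / (1 + ‖x‖ ^ 2)) * Ffun (‖x‖ ^ 2) / 2) *
              ((∑ k : Fin 3, (x k • (PiLp.proj 2 (fun _ : Fin 3 => ℝ) k : R3 →L[ℝ] ℝ)
                + x k • (PiLp.proj 2 (fun _ : Fin 3 => ℝ) k : R3 →L[ℝ] ℝ)))
                (EuclideanSpace.single j 1))) • (toSpinor Φ0 + Lmap Φ0 x) := by
        simp only [ContinuousLinearMap.add_apply, ContinuousLinearMap.coe_smul',
          Pi.smul_apply, ContinuousLinearMap.smulRight_apply, smul_eq_mul]
      have e2 : Lmap Φ0 (EuclideanSpace.single j 1) = wSpin Φ0 j := by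
        rw [Lmap_apply]
        rw [Finset.sum_eq_single j]
        · simp [EuclideanSpace.single_apply]
        · intro k _ hk
          simp [EuclideanSpace.single_apply, hk]
        · simp
      have e3 : ((∑ k : Fin 3, (x k • (PiLp.proj 2 (fun _ : Fin 3 => ℝ) k : R3 →L[ℝ] ℝ)
            + x k • (PiLp.proj 2 (fun _ : Fin 3 => ℝ) k : R3 →L[ℝ] ℝ)))
            (EuclideanSpace.single j 1)) = 2 * x j := by
        rw [ContinuousLinearMap.sum_apply]
        rw [Finset.sum_eq_single j]
        · simp [EuclideanSpace.single_apply]; ring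
        · intro k _ hk
          simp [EuclideanSpace.single_apply, hk]
        · simp
      have target_eq : toSpinor ((((-(3 / (1 + ‖x‖ ^ 2)) * Ffun (‖x‖ ^ 2) * x j : ℝ) : ℂ) •
            ((1 : Matrix (Fin 4) (Fin 4) ℂ) + Complex.I • alphaDot x)
          + ((Ffun (‖x‖ ^ 2) : ℝ) : ℂ) • (Complex.I • alpha j)).mulVec Φ0)
          = (-(3 / (1 + ‖x‖ ^ 2)) * Ffun (‖x‖ ^ 2) * x j) •
              toSpinor (((1 : Matrix (Fin 4) (Fin 4) ℂ) + Complex.I • alphaDot x).mulVec Φ0)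
            + Ffun (‖x‖ ^ 2) • wSpin Φ0 j := by
        rw [Matrix.add_mulVec, toSpinor_add, Matrix.smul_mulVec, Matrix.smul_mulVec,
          toSpinor_csmul, toSpinor_csmul, ← rsmul, ← rsmul]
        rfl
      rw [e1, e2, e3, target_eq, ← G_eq Φ0 x]
      rw [show (-(3 / (1 + ‖x‖ ^ 2)) * Ffun (‖x‖ ^ 2) / 2) * (2 * x j)
          = -(3 / (1 + ‖x‖ ^ 2)) * Ffun (‖x‖ ^ 2) * x j from by ring]
      exact add_comm _ _
    have hpd : ∀ j : Fin 3, WithLp.ofLp (pd j ψ x) =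
        (((((-(3 / (1 + ‖x‖ ^ 2)) * Ffun (‖x‖ ^ 2) * x j : ℝ) : ℂ) •
            ((1 : Matrix (Fin 4) (Fin 4) ℂ) + Complex.I • alphaDot x)
          + ((Ffun (‖x‖ ^ 2) : ℝ) : ℂ) • (Complex.I • alpha j)).mulVec Φ0) : Fin 4 → ℂ) := by
      intro j
      simp only [pd]
      rw [hψ'.fderiv, hDval j]
      rfl
    have e4 : (∑ j : Fin 3, (alpha j).mulVec (WithLp.ofLp (pd j ψ x)))
        = (∑ j : Fin 3, alpha j * ((((-(3 / (1 + ‖x‖ ^ 2)) * Ffun (‖x‖ ^ 2) * x j : ℝ) : ℂ) •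
            ((1 : Matrix (Fin 4) (Fin 4) ℂ) + Complex.I • alphaDot x)
          + ((Ffun (‖x‖ ^ 2) : ℝ) : ℂ) • (Complex.I • alpha j)))).mulVec Φ0 := by
      rw [sum_mulVec]
      exact Finset.sum_congr rfl fun j _ => by
        rw [hpd j, Matrix.mulVec_mulVec]
    rw [show Dirac ψ x
        = toSpinor (-Complex.I • ∑ j : Fin 3, (alpha j).mulVec (WithLp.ofLp (pd j ψ x))) from rfl,
      e4, ← Matrix.smul_mulVec, key_matrix x (Ffun (‖x‖ ^ 2))]
    rw [hψ_def x, Matrix.smul_mulVec, toSpinor_csmul,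
      rsmul (3 / (1 + ‖x‖ ^ 2)), rsmul ((2 / (1 + ‖x‖ ^ 2)) ^ ((3:ℝ)/2)), smul_smul]
    rfl
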